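/- Let n ≥ 3 be an integer, m = (n−2)/(n+2), β > 0, and γ = (2β−1)/(1−m) (expander case ρ = −1). If u is a positive smooth radially symmetric solution of ((n−1)/m)·Δ(u^m) + β·(x·∇u) + γ·u = 0 on ℝⁿ, then for every x ∈ ℝⁿ one has the lower bound u(x) ≥ (u(0)^{m−1} + (β(1−m)/(2(n−1)))·|x|²)^{−1/(1−m)}. -/

import Mathlib

open Real MeasureTheory Metric
open scoped Topology RealInnerProductSpace

noncomputable section

/-- Euclidean space ℝⁿ. -/
abbrev Euc (n : ℕ) := EuclideanSpace ℝ (Fin n)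

/-- Euclidean Laplacian: sum of pure second derivatives in the coordinate directions. -/
def lap {n : ℕ} (f : Euc n → ℝ) (x : Euc n) : ℝ :=
  ∑ i : Fin n, fderiv ℝ (fun y => fderiv ℝ f y (EuclideanSpace.single i 1)) x
    (EuclideanSpace.single i 1)

/-- The conformally flat Yamabe soliton equation
`((n-1)/m)·Δ(u^m) + β·(x·∇u) + γ·u = 0` on ℝⁿ. -/
def YamabePDE {n : ℕ} (m β γ : ℝ) (u : Euc n → ℝ) : Prop :=
  ∀ x : Euc n, ((n : ℝ) - 1) / m * lap (fun y => u y ^ m) x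
      + β * ⟪x, gradient u x⟫ + γ * u x = 0

/-- A function on ℝⁿ is radially symmetric if it depends only on the norm. -/
def IsRadial {n : ℕ} (u : Euc n → ℝ) : Prop :=
  ∀ x y : Euc n, ‖x‖ = ‖y‖ → u x = u y

/-- Scalar curvature of the conformally flat metric g = u^{4/(n+2)}·dx²:
`R = -(4(n-1)/(n-2))·u⁻¹·Δ(u^m)`. -/
def scalarCurv {n : ℕ} (m : ℝ) (u : Euc n → ℝ) (x : Euc n) : ℝ :=
  -(4 * ((n : ℝ) - 1) / ((n : ℝ) - 2)) * lap (fun y => u y ^ m) x / u x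

/-!
Write `u x = f ‖x‖` and `φ = f^(m-1)`. In divergence form the equation reads
`((n-1)/m) (r^(n-1) (f^m)')' = -r^(n-1) (β r f' + γ f)`, and with `κ = β(1-m)/(n-1)` the
function `H r = r^(n-1) f (φ' - κ r)` satisfies `H' = (1-m)(γ - nβ)/(n-1) · r^(n-1) f`.
For expanders `(1-m) γ = 2β - 1 < nβ(1-m)`, so `H` decreases from `H 0 = 0`; hence
`φ' ≤ κ r`, i.e. `φ r ≤ φ 0 + κ r²/2`, and raising to the negative power `1/(m-1)` gives the bound.
-/

lemma fderiv_fderiv_apply_eq_deriv_deriv {E : Type*} [NormedAddCommGroup E] [NormedSpace ℝ E]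
    {g : E → ℝ} (hg : ContDiff ℝ 2 g) (x v : E) :
    fderiv ℝ (fun y => fderiv ℝ g y v) x v = deriv (deriv fun t : ℝ => g (x + t • v)) 0 := by
  have hline : ∀ t : ℝ, HasDerivAt (fun s : ℝ => x + s • v) v t := fun t => by
    simpa using ((hasDerivAt_id t).smul_const v).const_add x
  have hderiv : deriv (fun t : ℝ => g (x + t • v)) = fun t => fderiv ℝ g (x + t • v) v :=
    funext fun t => ((hg.differentiable two_ne_zero _).hasFDerivAt.comp_hasDerivAt t
      (hline t)).deriv
  have hdg : Differentiable ℝ fun y => fderiv ℝ g y v :=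
    ((hg.fderiv_right (m := 1) (by norm_num)).differentiable one_ne_zero).clm_apply
      (differentiable_const v)
  rw [hderiv]
  simpa [Function.comp_def] using ((hdg _).hasFDerivAt.comp_hasDerivAt 0 (hline 0)).deriv.symm

lemma deriv_deriv_comp_sqrt_sq_add_sq {W : ℝ → ℝ} (hW : ContDiff ℝ 2 W) {r : ℝ} (hr : 0 < r) :
    deriv (deriv fun t => W √(r ^ 2 + t ^ 2)) 0 = deriv W r / r := by
  have hrt : ∀ t : ℝ, 0 < r ^ 2 + t ^ 2 := fun t => by positivity
  have hη : ∀ t : ℝ, HasDerivAt (fun s : ℝ => √(r ^ 2 + s ^ 2)) (t / √(r ^ 2 + t ^ 2)) t := by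
    intro t
    have h := (((hasDerivAt_pow 2 t).const_add (r ^ 2)).sqrt (hrt t).ne')
    exact h.congr_deriv (by field_simp; norm_num)
  have hη0 : √(r ^ 2 + 0 ^ 2) = r := by simp [Real.sqrt_sq hr.le]
  have hderiv : deriv (fun t => W √(r ^ 2 + t ^ 2))
      = fun t => deriv W √(r ^ 2 + t ^ 2) * (t / √(r ^ 2 + t ^ 2)) :=
    funext fun t => (((hW.differentiable two_ne_zero) _).hasDerivAt.comp t (hη t)).deriv
  have hslope : HasDerivAt (fun t : ℝ => t / √(r ^ 2 + t ^ 2)) (1 / r) 0 := by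
    refine ((hasDerivAt_id 0).div (hη 0) (by rw [hη0]; exact hr.ne')).congr_deriv ?_
    simp only [hη0, zero_div, mul_zero, sub_zero, one_mul, one_div]
    field_simp
  have hW' : DifferentiableAt ℝ (fun t => deriv W √(r ^ 2 + t ^ 2)) 0 :=
    (hW.differentiable_deriv_two _).comp 0 (hη 0).differentiableAt
  have hprod : HasDerivAt (fun t => deriv W √(r ^ 2 + t ^ 2) * (t / √(r ^ 2 + t ^ 2)))
      (deriv (fun t => deriv W √(r ^ 2 + t ^ 2)) 0 * (0 / √(r ^ 2 + 0 ^ 2))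
        + deriv W √(r ^ 2 + 0 ^ 2) * (1 / r)) 0 :=
    hW'.hasDerivAt.mul hslope
  rw [hderiv, hprod.deriv, hη0]
  ring

lemma IsRadial.apply_eq_smul {n : ℕ} {w : Euc n → ℝ} (hw : IsRadial w) {e : Euc n}
    (he : ‖e‖ = 1) (y : Euc n) : w y = w (‖y‖ • e) :=
  hw _ _ (by rw [norm_smul, he, mul_one, norm_norm])

lemma norm_smul_add_smul_of_orthonormal {E : Type*} [NormedAddCommGroup E]
    [InnerProductSpace ℝ E] {e v : E} (he : ‖e‖ = 1) (hv : ‖v‖ = 1) (hev : ⟪e, v⟫ = 0)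
    (r t : ℝ) : ‖r • e + t • v‖ = √(r ^ 2 + t ^ 2) := by
  rw [← Real.sqrt_sq (norm_nonneg _), norm_add_sq_real, real_inner_smul_left,
    real_inner_smul_right, hev, norm_smul, norm_smul, he, hv]
  simp [sq_abs]

lemma lap_smul_single_of_isRadial {n : ℕ} {w : Euc n → ℝ} (hw : ContDiff ℝ 2 w)
    (hrad : IsRadial w) (i : Fin n) {r : ℝ} (hr : 0 < r) :
    lap w (r • EuclideanSpace.single i 1)
      = deriv (deriv fun s => w (s • EuclideanSpace.single i 1)) r
        + ((n : ℝ) - 1) * deriv (fun s => w (s • EuclideanSpace.single i 1)) r / r := by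
  set e : Euc n := EuclideanSpace.single i 1
  set W := fun s : ℝ => w (s • e)
  have he : ‖e‖ = 1 := by simp [e]
  have hW : ContDiff ℝ 2 W := hw.comp (contDiff_id.smul contDiff_const)
  have hterm : ∀ j, fderiv ℝ (fun y => fderiv ℝ w y (EuclideanSpace.single j 1)) (r • e)
      (EuclideanSpace.single j 1) = if j = i then deriv (deriv W) r else deriv W r / r := by
    intro j
    rw [fderiv_fderiv_apply_eq_deriv_deriv hw]
    split_ifs with hji
    · subst hji
      have hline : (fun t : ℝ => w (r • e + t • e)) = fun t => W (r + t) := by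
        funext t; simp only [W, add_smul]
      have hshift : deriv (fun t => W (r + t)) = fun t => deriv W (r + t) :=
        funext (deriv_comp_const_add W r)
      rw [hline, hshift, deriv_comp_const_add, add_zero]
    · have hev : ⟪e, EuclideanSpace.single j 1⟫ = 0 := by
        simp [e, EuclideanSpace.inner_single_left, hji]
      have hplane : (fun t : ℝ => w (r • e + t • EuclideanSpace.single j 1))
          = fun t => W √(r ^ 2 + t ^ 2) := by
        funext t
        rw [hrad.apply_eq_smul he, norm_smul_add_smul_of_orthonormal he (by simp) hev]
      rw [hplane, deriv_deriv_comp_sqrt_sq_add_sq hW hr]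
  simp only [lap, hterm, Finset.sum_ite, Finset.filter_eq', Finset.filter_ne',
    Finset.sum_const, Finset.card_erase_of_mem (Finset.mem_univ i), Finset.mem_univ, if_true,
    Finset.card_singleton, Finset.card_univ, Fintype.card_fin, one_smul, nsmul_eq_mul]
  rw [Nat.cast_pred (Fin.pos i), mul_div_assoc]

lemma inner_smul_gradient_smul {E : Type*} [NormedAddCommGroup E] [InnerProductSpace ℝ E]
    [CompleteSpace E] {u : E → ℝ} (hu : Differentiable ℝ u) (e : E) (r : ℝ) :
    ⟪r • e, gradient u (r • e)⟫ = r * deriv (fun s => u (s • e)) r := by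
  have hline : HasDerivAt (fun s : ℝ => u (s • e)) (fderiv ℝ u (r • e) e) r :=
    (hu _).hasFDerivAt.comp_hasDerivAt r (by simpa using (hasDerivAt_id r).smul_const e)
  rw [hline.deriv, real_inner_comm, gradient, InnerProductSpace.toDual_symm_apply, map_smul,
    smul_eq_mul]

/-- The soliton equation for `u y = f ‖y‖` away from the origin, where
`Δ(u^m) = W'' + (n - 1) W' / r` with `W = f^m`. -/
def RadialYamabeODE (n : ℕ) (m β γ : ℝ) (f : ℝ → ℝ) : Prop :=
  ∀ r, 0 < r → ((n : ℝ) - 1) / m * (deriv (deriv fun s => f s ^ m) r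
    + ((n : ℝ) - 1) * deriv (fun s => f s ^ m) r / r) + β * (r * deriv f r) + γ * f r = 0

section RadialODE

variable {n : ℕ} {m β γ : ℝ} {f : ℝ → ℝ}

lemma hasDerivAt_rpow_of_pos (hf : Differentiable ℝ f) (hpos : ∀ r, 0 < f r) (p r : ℝ) :
    HasDerivAt (fun s => f s ^ p) (p * f r ^ (p - 1) * deriv f r) r := by
  convert (hf r).hasDerivAt.rpow_const (p := p) (Or.inl (hpos r).ne') using 1
  ring

lemma mul_deriv_rpow_sub_one (hf : Differentiable ℝ f) (hpos : ∀ r, 0 < f r) (hm : m ≠ 0)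
    (r : ℝ) :
    f r * deriv (fun s => f s ^ (m - 1)) r = (m - 1) / m * deriv (fun s => f s ^ m) r := by
  rw [(hasDerivAt_rpow_of_pos hf hpos m r).deriv, (hasDerivAt_rpow_of_pos hf hpos (m - 1) r).deriv,
    Real.rpow_sub_one (hpos r).ne' (m - 1)]
  have := (hpos r).ne'
  field_simp

lemma hasDerivAt_pow_mul_deriv_rpow (hn : 2 ≤ n) (hm : m ≠ 0)
    (hf : ContDiff ℝ 2 f) (hpos : ∀ r, 0 < f r)
    (hode : RadialYamabeODE n m β γ f) {r : ℝ} (hr : 0 < r) :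
    HasDerivAt (fun s => s ^ (n - 1) * deriv (fun s => f s ^ m) s)
      (-(m / ((n : ℝ) - 1)) * r ^ (n - 1) * (β * r * deriv f r + γ * f r)) r := by
  set W := fun s => f s ^ m
  have hW : ContDiff ℝ 2 W := hf.rpow_const_of_ne fun s => (hpos s).ne'
  have hn1 : (0 : ℝ) < n - 1 := sub_pos.mpr (Nat.one_lt_cast.mpr hn)
  have hpow : HasDerivAt (fun s : ℝ => s ^ (n - 1)) (((n : ℝ) - 1) * r ^ (n - 2)) r := by
    have h := hasDerivAt_pow (n - 1) r
    rwa [Nat.cast_sub (by omega : 1 ≤ n), Nat.cast_one, Nat.sub_sub] at h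
  refine (hpow.mul (hW.differentiable_deriv_two r).hasDerivAt).congr_deriv ?_
  have hrn : r ^ (n - 1) = r ^ (n - 2) * r := by
    rw [← pow_succ]; congr 1; omega
  rw [hrn]
  linear_combination (norm := skip) (m * (r ^ (n - 2) * r) / ((n : ℝ) - 1)) * hode r hr
  field_simp
  ring

lemma deriv_rpow_sub_one_le_of_radial_ode (hn : 2 ≤ n) (hm : m ≠ 0)
    (hγ : (1 - m) * (γ - n * β) ≤ 0) (hf : ContDiff ℝ 2 f) (hpos : ∀ r, 0 < f r)
    (hode : RadialYamabeODE n m β γ f)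
    {r : ℝ} (hr : 0 < r) :
    deriv (fun s => f s ^ (m - 1)) r ≤ β * (1 - m) / ((n : ℝ) - 1) * r := by
  have hn1 : (0 : ℝ) < n - 1 := sub_pos.mpr (Nat.one_lt_cast.mpr hn)
  have hfd : Differentiable ℝ f := hf.differentiable (by norm_num)
  set κ := β * (1 - m) / ((n : ℝ) - 1)
  set W := fun s => f s ^ m
  -- `H = r^(n-1) f (φ' - κ r)` for `φ = f^(m-1)`, written through `mul_deriv_rpow_sub_one`
  -- so that the divergence form of the ODE computes `H'`.
  set H := fun s => (m - 1) / m * (s ^ (n - 1) * deriv W s) - κ * (s ^ n * f s)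
  have hH' : ∀ s, 0 < s → HasDerivAt H
      ((1 - m) * (γ - n * β) / ((n : ℝ) - 1) * (s ^ (n - 1) * f s)) s := by
    intro s hs
    have hsn := (hasDerivAt_pow n s).mul (hfd s).hasDerivAt
    refine (((hasDerivAt_pow_mul_deriv_rpow hn hm hf hpos hode hs).const_mul
      ((m - 1) / m)).sub (hsn.const_mul κ)).congr_deriv ?_
    have hsn1 : s ^ n = s ^ (n - 1) * s := by rw [← pow_succ]; congr 1; omega
    simp only [κ, hsn1]
    field_simp
    ring
  have hH_anti : AntitoneOn H (Set.Ici 0) := by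
    have hW : ContDiff ℝ 2 W := hf.rpow_const_of_ne fun s => (hpos s).ne'
    refine antitoneOn_of_deriv_nonpos (convex_Ici 0) ?_ ?_ ?_
    · have hW' : Continuous (deriv W) := hW.continuous_deriv one_le_two
      exact ((continuous_const.mul ((continuous_pow _).mul hW')).sub
        (continuous_const.mul ((continuous_pow _).mul hfd.continuous))).continuousOn
    · rw [interior_Ici]
      exact fun s hs => (hH' s hs).differentiableAt.differentiableWithinAt
    · rw [interior_Ici]
      intro s hs
      rw [(hH' s hs).deriv]
      exact mul_nonpos_of_nonpos_of_nonneg (div_nonpos_of_nonpos_of_nonneg hγ hn1.le)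
        (mul_pos (pow_pos hs _) (hpos s)).le
  have hH0 : H 0 = 0 := by simp [H, zero_pow (by omega : n - 1 ≠ 0), zero_pow (by omega : n ≠ 0)]
  have hHr : H r = r ^ (n - 1) * f r * (deriv (fun s => f s ^ (m - 1)) r - κ * r) := by
    have hrn : r ^ n = r ^ (n - 1) * r := by rw [← pow_succ]; congr 1; omega
    simp only [H, hrn]
    linear_combination (-r ^ (n - 1)) * mul_deriv_rpow_sub_one hfd hpos hm r
  have := hH_anti Set.self_mem_Ici hr.le hr.le
  nlinarith [pow_pos hr (n - 1), hpos r, mul_pos (pow_pos hr (n - 1)) (hpos r)]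

lemma rpow_sub_one_le_of_radial_ode (hn : 2 ≤ n) (hm : m ≠ 0)
    (hγ : (1 - m) * (γ - n * β) ≤ 0) (hf : ContDiff ℝ 2 f) (hpos : ∀ r, 0 < f r)
    (hode : RadialYamabeODE n m β γ f)
    {r : ℝ} (hr : 0 ≤ r) :
    f r ^ (m - 1) ≤ f 0 ^ (m - 1) + β * (1 - m) / (2 * ((n : ℝ) - 1)) * r ^ 2 := by
  have hfd : Differentiable ℝ f := hf.differentiable (by norm_num)
  set c := β * (1 - m) / (2 * ((n : ℝ) - 1))
  have hψ' : ∀ s, HasDerivAt (fun s => f s ^ (m - 1) - c * s ^ 2)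
      (deriv (fun s => f s ^ (m - 1)) s - c * (2 * s)) s := fun s =>
    (hasDerivAt_rpow_of_pos hfd hpos (m - 1) s).differentiableAt.hasDerivAt.sub
      ((hasDerivAt_pow 2 s).const_mul c |>.congr_deriv (by ring))
  have hψ_anti : AntitoneOn (fun s => f s ^ (m - 1) - c * s ^ 2) (Set.Ici 0) := by
    refine antitoneOn_of_deriv_nonpos (convex_Ici 0)
      (fun s _ => (hψ' s).continuousAt.continuousWithinAt) ?_ ?_ <;> rw [interior_Ici]
    · exact fun s _ => (hψ' s).differentiableAt.differentiableWithinAt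
    · intro s hs
      have := deriv_rpow_sub_one_le_of_radial_ode hn hm hγ hf hpos hode hs
      have hc : c * (2 * s) = β * (1 - m) / ((n : ℝ) - 1) * s := by
        have : (n : ℝ) - 1 ≠ 0 := (sub_pos.mpr (Nat.one_lt_cast.mpr hn)).ne'
        simp only [c]
        field_simp
      rw [(hψ' s).deriv, hc]
      linarith
  have := hψ_anti Set.self_mem_Ici hr hr
  simp only at this
  linarith [zero_pow (two_ne_zero : 2 ≠ 0) (M₀ := ℝ)]

end RadialODE

lemma rpow_neg_inv_one_sub_le {a b m : ℝ} (ha : 0 < a) (hm : m < 1) (hab : a ^ (m - 1) ≤ b) :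
    b ^ (-(1 / (1 - m))) ≤ a := by
  calc b ^ (-(1 / (1 - m))) ≤ (a ^ (m - 1)) ^ (-(1 / (1 - m))) :=
        Real.rpow_le_rpow_of_nonpos (by positivity) hab
          (neg_nonpos.mpr (one_div_nonneg.mpr (by linarith)))
    _ = a := by
        rw [← Real.rpow_mul ha.le, show (m - 1) * -(1 / (1 - m)) = 1 by
          field_simp [(by linarith : (1 - m) ≠ 0)]; ring, Real.rpow_one]

/-- lower bound for Yamabe expanders. -/
theorem expander_lower_bound (n : ℕ) (hn : 3 ≤ n)
    (m β γ : ℝ)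
    (hm : m = ((n : ℝ) - 2) / ((n : ℝ) + 2))
    (hβ : 0 < β)
    (hγ : γ = (2 * β - 1) / (1 - m))
    (u : Euc n → ℝ)
    (hpos : ∀ x, 0 < u x) (hsmooth : ContDiff ℝ (⊤ : ℕ∞) u)
    (hrad : IsRadial u) (hpde : YamabePDE m β γ u) :
    ∀ x : Euc n,
      (u 0 ^ (m - 1) + β * (1 - m) / (2 * ((n : ℝ) - 1)) * ‖x‖ ^ 2) ^ (-(1 / (1 - m)))
        ≤ u x := by
  intro x
  have hn' : (3 : ℝ) ≤ n := by exact_mod_cast hn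
  have hm0 : 0 < m := by rw [hm]; exact div_pos (by linarith) (by linarith)
  have hm1 : m < 1 := by rw [hm, div_lt_one (by linarith)]; linarith
  -- `(1 - m) γ = 2β - 1`, so the left side is `-(2β(n-2)/(n+2) + 1)`.
  have hsign : (1 - m) * (γ - n * β) ≤ 0 := by
    rw [hγ, mul_sub, mul_div_cancel₀ _ (by linarith), hm]
    rw [← sub_nonneg]
    have : (0 : ℝ) < n + 2 := by linarith
    field_simp
    nlinarith
  have hu2 : ContDiff ℝ 2 u := hsmooth.of_le (WithTop.coe_le_coe.mpr le_top)
  let i₀ : Fin n := ⟨0, by omega⟩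
  set f := fun s : ℝ => u (s • EuclideanSpace.single i₀ 1)
  have hode : RadialYamabeODE n m β γ f := by
    intro r hr
    have hradm : IsRadial fun y => u y ^ m := fun y z hyz => congrArg (· ^ m) (hrad y z hyz)
    have h := hpde (r • EuclideanSpace.single i₀ 1)
    rwa [lap_smul_single_of_isRadial (hu2.rpow_const_of_ne fun y => (hpos y).ne') hradm _ hr,
      inner_smul_gradient_smul (hu2.differentiable two_ne_zero)] at h
  have hbound := rpow_sub_one_le_of_radial_ode (f := f) (by omega) hm0.ne' hsign
    (hu2.comp (contDiff_id.smul contDiff_const)) (fun s => hpos _) hode (norm_nonneg x)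
  have hfx : f ‖x‖ = u x := (hrad.apply_eq_smul (by simp) x).symm
  have hf0 : f 0 = u 0 := by simp [f]
  rw [hfx, hf0] at hbound
  exact rpow_neg_inv_one_sub_le (hpos x) hm1 hbound
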